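/- Let (C, C₋, C₊) be a Reedy category and ([n], X) an object of ∫N^{-,+}(C). Then the following are equivalent: (1) X is identity-reflecting, i.e. ([n], X) is an object of ∫N^{--,+}_+(C); (2) the identity morphism of ([n], X) is a maximal element of the hom-poset Hom(([n], X), ([n], X)); (3) the identity morphism of ([n], X) is a minimal element of that hom-poset; (4) the identity morphism of ([n], X) is the largest element of its own ∼-equivalence class; (5) the ∼-equivalence class of the identity morphism of ([n], X) is a singleton. -/

import Mathlib

namespace ReedyPaper

open CategoryTheory

universe v₂ u₂ v₁ u₁ v u

variable {C : Type u} [Category.{v} C]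

def IsIdMor {x y : C} (f : x ⟶ y) : Prop := ∃ h : x = y, f = eqToHom h

structure ReedyStruct (C : Type u) [Category.{v} C] where
  neg : MorphismProperty C
  pos : MorphismProperty C
  neg_id : ∀ x : C, neg (𝟙 x)
  pos_id : ∀ x : C, pos (𝟙 x)
  neg_comp : ∀ {x y z : C} (f : x ⟶ y) (g : y ⟶ z), neg f → neg g → neg (f ≫ g)
  pos_comp : ∀ {x y z : C} (f : x ⟶ y) (g : y ⟶ z), pos f → pos g → pos (f ≫ g)
  factor_existsUnique : ∀ {x y : C} (f : x ⟶ y),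
    ∃! t : Σ z : C, (x ⟶ z) × (z ⟶ y), neg t.2.1 ∧ pos t.2.2 ∧ t.2.1 ≫ t.2.2 = f
  wf : WellFounded (fun x y : C =>
    (∃ f : x ⟶ y, pos f ∧ ¬ IsIdMor f) ∨ (∃ f : y ⟶ x, neg f ∧ ¬ IsIdMor f))

structure ChainObj (C : Type u) [Category.{v} C] where
  n : ℕ
  X : Fin (n + 1) ⥤ C

structure ChainHom (P Q : ChainObj C) where
  α : Fin (P.n + 1) →o Fin (Q.n + 1)
  θ : ∀ i : Fin (P.n + 1), P.X.obj i ⟶ Q.X.obj (α i)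
  natural : ∀ {i j : Fin (P.n + 1)} (h : i ≤ j),
    P.X.map (homOfLE h) ≫ θ j = θ i ≫ Q.X.map (homOfLE (α.monotone h))

theorem ChainHom.ext' {P Q : ChainObj C} {f g : ChainHom P Q}
    (hα : f.α = g.α) (hθ : HEq f.θ g.θ) : f = g := by
  cases f; cases g; cases hα; cases hθ; rfl

def ChainHom.id (P : ChainObj C) : ChainHom P P where
  α := OrderHom.id
  θ i := 𝟙 _
  natural {i j} h := by
    show P.X.map (homOfLE h) ≫ 𝟙 (P.X.obj j) = 𝟙 (P.X.obj i) ≫ P.X.map (homOfLE h)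
    simp

def ChainHom.comp {P Q S : ChainObj C} (f : ChainHom P Q) (g : ChainHom Q S) :
    ChainHom P S where
  α := g.α.comp f.α
  θ i := f.θ i ≫ g.θ (f.α i)
  natural {i j} h := by
    show P.X.map (homOfLE h) ≫ f.θ j ≫ g.θ (f.α j) =
      (f.θ i ≫ g.θ (f.α i)) ≫ S.X.map (homOfLE (g.α.monotone (f.α.monotone h)))
    rw [← Category.assoc, f.natural h, Category.assoc, g.natural (f.α.monotone h),
      ← Category.assoc]

instance : Category (ChainObj C) where
  Hom := ChainHom
  id := ChainHom.id
  comp := ChainHom.comp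
  id_comp f := ChainHom.ext' rfl (heq_of_eq (funext fun i => Category.id_comp _))
  comp_id f := ChainHom.ext' rfl (heq_of_eq (funext fun i => Category.comp_id _))
  assoc f g h := ChainHom.ext' rfl (heq_of_eq (funext fun i => Category.assoc _ _ _))

/-- The partial order on the hom-sets of `∫N(C)` (and of `∫N^{-,+}(C)`):
`(α, θ) ≤ (α', θ')` iff `α ≤ α'` pointwise and `θ'ᵢ = Y(α(i) ≤ α'(i)) ∘ θᵢ` for all `i`. -/
def ChainHom.le {P Q : ChainObj C} (f g : ChainHom P Q) : Prop :=
  (∀ i, f.α i ≤ g.α i) ∧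
    ∀ (i : Fin (P.n + 1)) (h : f.α i ≤ g.α i), g.θ i = f.θ i ≫ Q.X.map (homOfLE h)

theorem ChainHom.le_comp_right {P Q S : ChainObj C} {f f' : P ⟶ Q} (g : Q ⟶ S)
    (h : ChainHom.le f f') : ChainHom.le (f ≫ g) (f' ≫ g) := by
  refine ⟨fun i => g.α.monotone (h.1 i), fun i hi => ?_⟩
  show f'.θ i ≫ g.θ (f'.α i) = (f.θ i ≫ g.θ (f.α i)) ≫ S.X.map (homOfLE hi)
  rw [h.2 i (h.1 i), Category.assoc, g.natural (h.1 i), ← Category.assoc]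
  rfl

theorem ChainHom.le_comp_left {P Q S : ChainObj C} (f : P ⟶ Q) {g g' : Q ⟶ S}
    (h : ChainHom.le g g') : ChainHom.le (f ≫ g) (f ≫ g') := by
  refine ⟨fun i => h.1 (f.α i), fun i hi => ?_⟩
  show f.θ i ≫ g'.θ (f.α i) = (f.θ i ≫ g.θ (f.α i)) ≫ S.X.map (homOfLE hi)
  rw [h.2 (f.α i) (h.1 (f.α i)), ← Category.assoc]
  rfl

/-- Objects of `∫N^{-,+}(C)`: chains all of whose morphisms lie in `C₋`. -/
structure NegObj (R : ReedyStruct C) where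
  n : ℕ
  X : Fin (n + 1) ⥤ C
  negMap : ∀ {i j : Fin (n + 1)} (h : i ≤ j), R.neg (X.map (homOfLE h))

variable {R : ReedyStruct C}

/-- The underlying object of `∫N(C)`. -/
def NegObj.chain (P : NegObj R) : ChainObj C := ⟨P.n, P.X⟩

/-- Morphisms of `∫N^{-,+}(C)`: morphisms of `∫N(C)` all of whose components lie in `C₊`. -/
def NegHomT (P Q : NegObj R) : Type v :=
  { f : P.chain ⟶ Q.chain // ∀ i, R.pos (f.θ i) }

def NegHomT.id (P : NegObj R) : NegHomT P P := ⟨𝟙 P.chain, fun _ => R.pos_id _⟩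

def NegHomT.comp {P Q S : NegObj R} (f : NegHomT P Q) (g : NegHomT Q S) : NegHomT P S :=
  ⟨f.1 ≫ g.1, fun i => by
    show R.pos (f.1.θ i ≫ g.1.θ (f.1.α i))
    exact R.pos_comp _ _ (f.2 i) (g.2 _)⟩

theorem NegHomT.id_comp {P Q : NegObj R} (f : NegHomT P Q) : (NegHomT.id P).comp f = f := by
  apply Subtype.ext
  show 𝟙 P.chain ≫ f.1 = f.1
  exact Category.id_comp f.1

theorem NegHomT.comp_id {P Q : NegObj R} (f : NegHomT P Q) : f.comp (NegHomT.id Q) = f := by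
  apply Subtype.ext
  show f.1 ≫ 𝟙 Q.chain = f.1
  exact Category.comp_id f.1

theorem NegHomT.comp_assoc {P Q S T : NegObj R} (f : NegHomT P Q) (g : NegHomT Q S)
    (h : NegHomT S T) : (f.comp g).comp h = f.comp (g.comp h) := by
  apply Subtype.ext
  show (f.1 ≫ g.1) ≫ h.1 = f.1 ≫ (g.1 ≫ h.1)
  exact Category.assoc f.1 g.1 h.1

/-- The category `∫N^{-,+}(C)`. -/
instance : Category (NegObj R) where
  Hom := NegHomT
  id := NegHomT.id
  comp := NegHomT.comp
  id_comp := NegHomT.id_comp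
  comp_id := NegHomT.comp_id
  assoc := NegHomT.comp_assoc

/-- The order on the hom-sets of `∫N^{-,+}(C)`. -/
def NegHom.le {P Q : NegObj R} (f g : P ⟶ Q) : Prop := ChainHom.le f.1 g.1

/-- The equivalence relation `∼` on the hom-sets of `∫N^{-,+}(C)`: the
symmetric-transitive closure of `≤`. -/
def NegHom.equiv {P Q : NegObj R} (f g : P ⟶ Q) : Prop :=
  Relation.EqvGen (fun a b : P ⟶ Q => NegHom.le a b) f g

theorem NegHom.le_comp_right {P Q S : NegObj R} {f f' : P ⟶ Q} (g : Q ⟶ S)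
    (h : NegHom.le f f') : NegHom.le (f ≫ g) (f' ≫ g) :=
  ChainHom.le_comp_right g.1 h

theorem NegHom.le_comp_left {P Q S : NegObj R} (f : P ⟶ Q) {g g' : Q ⟶ S}
    (h : NegHom.le g g') : NegHom.le (f ≫ g) (f ≫ g') :=
  ChainHom.le_comp_left f.1 h

/-- Identity-reflectingness of a chain. -/
def NegObj.IdRefl (P : NegObj R) : Prop :=
  ∀ {i j : Fin (P.n + 1)} (h : i ≤ j), IsIdMor (P.X.map (homOfLE h)) → i = j

/-- Objects of `∫N^{--,+}_+(C)`: identity-reflecting chains in `C₋`. -/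
structure StrictObj (R : ReedyStruct C) where
  toNegObj : NegObj R
  idRefl : toNegObj.IdRefl

/-- Morphisms of `∫N^{--,+}_+(C)`: morphisms of `∫N^{-,+}(C)` with `α` injective. -/
def StrictHomT (P Q : StrictObj R) : Type v :=
  { f : P.toNegObj ⟶ Q.toNegObj // Function.Injective f.1.α }

def StrictHomT.id (P : StrictObj R) : StrictHomT P P :=
  ⟨𝟙 P.toNegObj, fun _ _ h => h⟩

def StrictHomT.comp {P Q S : StrictObj R} (f : StrictHomT P Q) (g : StrictHomT Q S) :
    StrictHomT P S :=
  ⟨f.1 ≫ g.1, fun _ _ h => f.2 (g.2 h)⟩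

/-- The category `∫N^{--,+}_+(C)`. -/
instance : Category (StrictObj R) where
  Hom := StrictHomT
  id := StrictHomT.id
  comp := StrictHomT.comp
  id_comp f := Subtype.ext (Category.id_comp f.1)
  comp_id f := Subtype.ext (Category.comp_id f.1)
  assoc f g h := Subtype.ext (Category.assoc f.1 g.1 h.1)

/-- The order on the hom-sets of `∫N^{--,+}_+(C)`. -/
def StrictHom.le {P Q : StrictObj R} (f g : P ⟶ Q) : Prop := NegHom.le f.1 g.1

/-- The equivalence relation `∼` on the hom-sets of `∫N^{--,+}_+(C)`. -/
def StrictHom.equiv {P Q : StrictObj R} (f g : P ⟶ Q) : Prop :=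
  Relation.EqvGen (fun a b : P ⟶ Q => StrictHom.le a b) f g

theorem StrictHom.le_comp_right {P Q S : StrictObj R} {f f' : P ⟶ Q} (g : Q ⟶ S)
    (h : StrictHom.le f f') : StrictHom.le (f ≫ g) (f' ≫ g) :=
  NegHom.le_comp_right g.1 h

theorem StrictHom.le_comp_left {P Q S : StrictObj R} (f : P ⟶ Q) {g g' : Q ⟶ S}
    (h : StrictHom.le g g') : StrictHom.le (f ≫ g) (f ≫ g') :=
  NegHom.le_comp_left f.1 h

/-- Objects of `Down_*(C)`: the same as those of `∫N^{-,+}(C)`. -/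
structure DownStar (R : ReedyStruct C) where
  obj : NegObj R

/-- The category `Down_*(C)`: hom-sets are the quotients of those of `∫N^{-,+}(C)`
by the symmetric-transitive closure of `≤`. -/
instance : Category (DownStar R) where
  Hom P Q := Quot (fun f g : P.obj ⟶ Q.obj => NegHom.le f g)
  id P := Quot.mk _ (𝟙 P.obj)
  comp {P Q S} f g :=
    Quot.lift
      (fun f' => Quot.lift (fun g' => Quot.mk _ (f' ≫ g'))
        (fun _ _ hg => Quot.sound (NegHom.le_comp_left f' hg)) g)
      (fun f₁ f₂ hf => Quot.inductionOn g (fun g' =>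
        Quot.sound (NegHom.le_comp_right g' hf))) f
  id_comp f := Quot.inductionOn f fun f' => congrArg (Quot.mk _) (Category.id_comp f')
  comp_id f := Quot.inductionOn f fun f' => congrArg (Quot.mk _) (Category.comp_id f')
  assoc f g h :=
    Quot.inductionOn f fun f' => Quot.inductionOn g fun g' => Quot.inductionOn h fun h' =>
      congrArg (Quot.mk _) (Category.assoc f' g' h')

/-- Objects of `Down(C)`: the same as those of `∫N^{--,+}_+(C)`. -/
structure Down (R : ReedyStruct C) where
  obj : StrictObj R

/-- The category `Down(C)`: hom-sets are the quotients of those of `∫N^{--,+}_+(C)`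
by the symmetric-transitive closure of `≤`. -/
instance : Category (Down R) where
  Hom P Q := Quot (fun f g : P.obj ⟶ Q.obj => StrictHom.le f g)
  id P := Quot.mk _ (𝟙 P.obj)
  comp {P Q S} f g :=
    Quot.lift
      (fun f' => Quot.lift (fun g' => Quot.mk _ (f' ≫ g'))
        (fun _ _ hg => Quot.sound (StrictHom.le_comp_left f' hg)) g)
      (fun f₁ f₂ hf => Quot.inductionOn g (fun g' =>
        Quot.sound (StrictHom.le_comp_right g' hf))) f
  id_comp f := Quot.inductionOn f fun f' => congrArg (Quot.mk _) (Category.id_comp f')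
  comp_id f := Quot.inductionOn f fun f' => congrArg (Quot.mk _) (Category.comp_id f')
  assoc f g h :=
    Quot.inductionOn f fun f' => Quot.inductionOn g fun g' => Quot.inductionOn h fun h' =>
      congrArg (Quot.mk _) (Category.assoc f' g' h')

/-- The quotient functor `∫N^{-,+}(C) → Down_*(C)`. -/
def qStar (R : ReedyStruct C) : NegObj R ⥤ DownStar R where
  obj P := ⟨P⟩
  map f := Quot.mk _ f
  map_id _ := rfl
  map_comp _ _ := rfl

/-- The inclusion functor `Down(C) → Down_*(C)`. -/
def downInclusion (R : ReedyStruct C) : Down R ⥤ DownStar R where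
  obj P := ⟨P.obj.toNegObj⟩
  map {P Q} f :=
    Quot.lift (fun f' : P.obj ⟶ Q.obj => Quot.mk _ f'.1) (fun _ _ h => Quot.sound h) f
  map_id _ := rfl
  map_comp {P Q S} f g := by
    induction f using Quot.ind
    induction g using Quot.ind
    rfl

/-- The last-component functor `∫N(C) → C`. -/
def lastChain : ChainObj C ⥤ C where
  obj P := P.X.obj (Fin.last P.n)
  map {P Q} f := f.θ (Fin.last P.n) ≫ Q.X.map (homOfLE (Fin.le_last (f.α (Fin.last P.n))))
  map_id P := by
    show 𝟙 (P.X.obj (Fin.last P.n)) ≫ P.X.map (homOfLE (Fin.le_last (Fin.last P.n))) = 𝟙 _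
    rw [Category.id_comp]
    exact P.X.map_id _
  map_comp {P Q S} f g := by
    show (f.θ (Fin.last P.n) ≫ g.θ (f.α (Fin.last P.n))) ≫
        S.X.map (homOfLE (Fin.le_last (g.α (f.α (Fin.last P.n))))) =
      (f.θ (Fin.last P.n) ≫ Q.X.map (homOfLE (Fin.le_last (f.α (Fin.last P.n))))) ≫
        g.θ (Fin.last Q.n) ≫ S.X.map (homOfLE (Fin.le_last (g.α (Fin.last Q.n))))
    rw [Category.assoc, Category.assoc, ← Category.assoc (Q.X.map _),
      g.natural (Fin.le_last (f.α (Fin.last P.n))), Category.assoc, ← Functor.map_comp,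
      homOfLE_comp]

theorem lastChain_eq_of_le {P Q : ChainObj C} {f g : P ⟶ Q} (h : ChainHom.le f g) :
    lastChain.map f = lastChain.map g := by
  show f.θ (Fin.last P.n) ≫ Q.X.map (homOfLE (Fin.le_last (f.α (Fin.last P.n)))) =
    g.θ (Fin.last P.n) ≫ Q.X.map (homOfLE (Fin.le_last (g.α (Fin.last P.n))))
  rw [h.2 (Fin.last P.n) (h.1 (Fin.last P.n)), Category.assoc, ← Functor.map_comp,
    homOfLE_comp]

/-- The forgetful functor `∫N^{-,+}(C) → ∫N(C)`. -/
def negForget (R : ReedyStruct C) : NegObj R ⥤ ChainObj C where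
  obj P := P.chain
  map f := f.1
  map_id _ := rfl
  map_comp _ _ := rfl

/-- The last-component functor `∫N^{-,+}(C) → C`. -/
def lastNeg (R : ReedyStruct C) : NegObj R ⥤ C := negForget R ⋙ lastChain

/-- The forgetful functor `∫N^{--,+}_+(C) → ∫N^{-,+}(C)`. -/
def strictForget (R : ReedyStruct C) : StrictObj R ⥤ NegObj R where
  obj P := P.toNegObj
  map f := f.1
  map_id _ := rfl
  map_comp _ _ := rfl

/-- The last-component functor `∫N^{--,+}_+(C) → C`. -/
def lastStrict (R : ReedyStruct C) : StrictObj R ⥤ C := strictForget R ⋙ lastNeg R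

/-- The last-component functor `Down_*(C) → C`. -/
def lastDownStar (R : ReedyStruct C) : DownStar R ⥤ C where
  obj P := (lastNeg R).obj P.obj
  map {P Q} f :=
    Quot.lift (fun f' : P.obj ⟶ Q.obj => (lastNeg R).map f')
      (fun _ _ h => lastChain_eq_of_le h) f
  map_id P := (lastNeg R).map_id P.obj
  map_comp {P Q S} f g := by
    induction f using Quot.ind
    induction g using Quot.ind
    exact (lastNeg R).map_comp _ _

/-- The last-component functor `Down(C) → C`. -/
def lastDown (R : ReedyStruct C) : Down R ⥤ C where
  obj P := (lastStrict R).obj P.obj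
  map {P Q} f :=
    Quot.lift (fun f' : P.obj ⟶ Q.obj => (lastStrict R).map f')
      (fun _ _ h => lastChain_eq_of_le h) f
  map_id P := (lastStrict R).map_id P.obj
  map_comp {P Q S} f g := by
    induction f using Quot.ind
    induction g using Quot.ind
    exact (lastStrict R).map_comp _ _

/-- The wide subcategory `Γ₋` of `∫N^{-,+}(C)`: morphisms of the form
`(σ, id) : ([m], X ∘ σ) → ([n], X)` with `σ` surjective, i.e. morphisms whose simplicial
component is surjective and all of whose components are identities. -/
def GammaNeg (R : ReedyStruct C) {P Q : NegObj R} (f : P ⟶ Q) : Prop :=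
  Function.Surjective f.1.α ∧ ∀ i, IsIdMor (f.1.θ i)

/-- The wide subcategory `Γ₊` of `∫N^{-,+}(C)`: morphisms `(δ, θ)` with `δ` injective. -/
def GammaPos (R : ReedyStruct C) {P Q : NegObj R} (f : P ⟶ Q) : Prop :=
  Function.Injective f.1.α

/-- Whiskering (precomposition) with `lastF` is bijective on natural transformations
between functors out of `C`. -/
def WhiskerUnique {Γ : Type u₁} [Category.{v₁} Γ] (lastF : Γ ⥤ C) : Prop :=
  ∀ {D : Type u₂} [Category.{v₂} D] (F G : C ⥤ D)
    (ε : lastF ⋙ F ⟶ lastF ⋙ G), ∃! ε' : F ⟶ G, Functor.whiskerLeft lastF ε' = ε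

/-- `lastF : Γ ⥤ C` is a weak 1-localization of `Γ` at the `last`-weak equivalences
(the morphisms sent by `lastF` to identities). -/
def IsWeakLocalizationAtLastWeq {Γ : Type u₁} [Category.{v₁} Γ] (lastF : Γ ⥤ C) : Prop :=
  (∀ {P Q : Γ} (f : P ⟶ Q), IsIdMor (lastF.map f) → IsIso (lastF.map f)) ∧
  (∀ {E : Type u₂} [Category.{v₂} E] (G : Γ ⥤ E),
    (∀ {P Q : Γ} (f : P ⟶ Q), IsIdMor (lastF.map f) → IsIso (G.map f)) →
    ∃ H : C ⥤ E, Nonempty (lastF ⋙ H ≅ G)) ∧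
  (∀ {E : Type u₂} [Category.{v₂} E] (H H' : C ⥤ E) (θ : lastF ⋙ H ≅ lastF ⋙ H'),
    ∃! θ' : H ≅ H', Functor.isoWhiskerLeft lastF θ' = θ)

/-!
If `id ≤ g = (α, θ)`, then `θᵢ = X(i ≤ α i)` lies in `C₋ ∩ C₊` and is therefore an identity. If
`g ≤ id`, naturality of `θ` at `α i ≤ i` together with `g ≤ id` at `α i` gives
`X(α i ≤ i) ≫ θᵢ = id`, and uniqueness of the `(C₋, C₊)`-factorization of the identity again
makes `X(α i ≤ i)` an identity. So when `X` reflects identities, `α = id`, the identity is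
isolated in the hom-poset and hence alone in its `∼`-class.

Conversely, if `X(i ≤ j)` is an identity for some `i < j`, then `X(i ≤ i + 1)` has a retraction
in `C₋`, which well-foundedness only allows for identities. Sending `i` up to `i + 1`
(resp. `i + 1` down to `i`) then yields an endomorphism strictly above (resp. below) the identity.
-/

theorem IsIdMor.isIso {x y : C} {f : x ⟶ y} (h : IsIdMor f) : IsIso f := by
  obtain ⟨rfl, rfl⟩ := h
  infer_instance

theorem IsIdMor.inv {x y : C} {f : x ⟶ y} [IsIso f] (h : IsIdMor f) : IsIdMor (inv f) := by
  obtain ⟨rfl, rfl⟩ := h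
  exact ⟨rfl, by simp⟩

theorem map_homOfLE_self {J : Type*} [Preorder J] (X : J ⥤ C) {a : J} (h : a ≤ a) :
    X.map (homOfLE h) = 𝟙 (X.obj a) := by
  rw [show homOfLE h = 𝟙 a from homOfLE_refl h, X.map_id]

theorem isIdMor_map_homOfLE_of_eq_or {J : Type*} [Preorder J] (X : J ⥤ C) {i k a b : J}
    (hik : i ≤ k) (hid : IsIdMor (X.map (homOfLE hik))) (hab : a ≤ b)
    (h : a = b ∨ (a = i ∧ b = k)) : IsIdMor (X.map (homOfLE hab)) := by
  rcases h with rfl | ⟨rfl, rfl⟩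
  · exact ⟨rfl, map_homOfLE_self X hab⟩
  · exact hid

theorem update_id_apply_eq_or {J : Type*} [DecidableEq J] (i k a : J) :
    Function.update id i k a = a ∨ (a = i ∧ Function.update id i k a = k) := by
  rcases eq_or_ne a i with rfl | h
  · exact Or.inr ⟨rfl, Function.update_self _ _ _⟩
  · exact Or.inl (Function.update_of_ne h _ _)

theorem CovBy.monotone_update_id_left {J : Type*} [LinearOrder J] {i k : J} (h : i ⋖ k) :
    Monotone (Function.update id i k) := by
  intro a b hab
  rcases eq_or_ne a i with rfl | ha <;> rcases eq_or_ne b a with rfl | hb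
  · exact le_rfl
  · rw [Function.update_self, Function.update_of_ne hb]
    exact h.ge_of_gt (lt_of_le_of_ne hab hb.symm)
  · exact le_rfl
  · rw [Function.update_of_ne ha]
    rcases eq_or_ne b i with hbi | hbi
    · rw [hbi, Function.update_self]
      exact (hab.trans hbi.le).trans h.le
    · rwa [Function.update_of_ne hbi]

theorem CovBy.monotone_update_id_right {J : Type*} [LinearOrder J] {i k : J} (h : i ⋖ k) :
    Monotone (Function.update id k i) := by
  intro a b hab
  rcases eq_or_ne a k with rfl | ha <;> rcases eq_or_ne b a with rfl | hb
  · exact le_rfl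
  · rw [Function.update_self, Function.update_of_ne hb]
    exact h.le.trans hab
  · exact le_rfl
  · rw [Function.update_of_ne ha]
    rcases eq_or_ne b k with rfl | hbk
    · rw [Function.update_self]
      exact h.le_of_lt (lt_of_le_of_ne hab ha)
    · rwa [Function.update_of_ne hbk]

namespace ReedyStruct

variable (R : ReedyStruct C)

theorem pos_of_isIdMor {x y : C} {f : x ⟶ y} (h : IsIdMor f) : R.pos f := by
  obtain ⟨rfl, rfl⟩ := h
  exact R.pos_id x

theorem neg_of_isIdMor {x y : C} {f : x ⟶ y} (h : IsIdMor f) : R.neg f := by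
  obtain ⟨rfl, rfl⟩ := h
  exact R.neg_id x

/-- If `n ≫ p` already lies in `C₊`, then `𝟙 ≫ (n ≫ p)` is its `(C₋, C₊)`-factorization. -/
theorem isIdMor_of_neg_of_pos_comp {x y z : C} {n : x ⟶ y} {p : y ⟶ z} (hn : R.neg n)
    (hp : R.pos p) (hnp : R.pos (n ≫ p)) : IsIdMor n := by
  obtain ⟨_, _, huniq⟩ := R.factor_existsUnique (n ≫ p)
  have h := (huniq ⟨y, n, p⟩ ⟨hn, hp, rfl⟩).trans
    (huniq ⟨x, 𝟙 x, n ≫ p⟩ ⟨R.neg_id x, hnp, Category.id_comp _⟩).symm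
  obtain ⟨rfl, h⟩ := Sigma.mk.inj_iff.mp h
  exact ⟨rfl, congrArg Prod.fst (eq_of_heq h)⟩

theorem isIdMor_of_neg_of_pos {x y : C} {f : x ⟶ y} (hn : R.neg f) (hp : R.pos f) :
    IsIdMor f :=
  R.isIdMor_of_neg_of_pos_comp hn (R.pos_id y) (by rwa [Category.comp_id])

/-- Two non-identity morphisms `x ⟶ y` and `y ⟶ x` of `C₋` would form a descending cycle. -/
theorem isIdMor_of_neg_of_comp_eq_id {x y : C} {s : x ⟶ y} {r : y ⟶ x} (hs : R.neg s)
    (hr : R.neg r) (h : s ≫ r = 𝟙 x) : IsIdMor s := by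
  by_contra hs_id
  have hr_id : ¬ IsIdMor r := by
    rintro ⟨rfl, rfl⟩
    exact hs_id ⟨rfl, by simpa using h⟩
  exact R.wf.asymmetric _ _ (Or.inr ⟨s, hs, hs_id⟩) (Or.inr ⟨r, hr, hr_id⟩)

end ReedyStruct

namespace ChainHom

variable {P Q : ChainObj C}

theorem le_refl (f : ChainHom P Q) : f.le f :=
  ⟨fun _ => le_rfl, fun _ h => by rw [map_homOfLE_self, Category.comp_id]⟩

theorem eq_of_le {f g : ChainHom P Q} (h : f.le g) (hα : ∀ i, g.α i ≤ f.α i) : f = g := by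
  obtain ⟨α, θ, _⟩ := f
  obtain ⟨α', θ', _⟩ := g
  obtain rfl : α = α' := OrderHom.ext _ _ (funext fun i => le_antisymm (h.1 i) (hα i))
  congr
  funext i
  have e := h.2 i le_rfl
  rw [map_homOfLE_self, Category.comp_id] at e
  exact e.symm

def raise (f : ChainHom P Q) (α : Fin (P.n + 1) →o Fin (Q.n + 1)) (hα : ∀ i, f.α i ≤ α i) :
    ChainHom P Q where
  α := α
  θ i := f.θ i ≫ Q.X.map (homOfLE (hα i))
  natural {i j} h := by
    rw [← Category.assoc, f.natural h, Category.assoc, Category.assoc, ← Q.X.map_comp,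
      ← Q.X.map_comp, homOfLE_comp, homOfLE_comp]

theorem le_raise (f : ChainHom P Q) (α : Fin (P.n + 1) →o Fin (Q.n + 1))
    (hα : ∀ i, f.α i ≤ α i) : f.le (f.raise α hα) :=
  ⟨hα, fun _ _ => rfl⟩

noncomputable def lower (f : ChainHom P Q) (α : Fin (P.n + 1) →o Fin (Q.n + 1))
    (hα : ∀ i, α i ≤ f.α i) [hiso : ∀ i, IsIso (Q.X.map (homOfLE (hα i)))] : ChainHom P Q where
  α := α
  θ i := f.θ i ≫ inv (Q.X.map (homOfLE (hα i)))
  natural {i j} h := by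
    rw [← Category.assoc, f.natural h, Category.assoc, Category.assoc]
    congr 1
    rw [IsIso.comp_inv_eq, Category.assoc, IsIso.eq_inv_comp, ← Q.X.map_comp, ← Q.X.map_comp]
    exact congrArg Q.X.map (Subsingleton.elim _ _)

theorem lower_le (f : ChainHom P Q) (α : Fin (P.n + 1) →o Fin (Q.n + 1))
    (hα : ∀ i, α i ≤ f.α i) [hiso : ∀ i, IsIso (Q.X.map (homOfLE (hα i)))] :
    (f.lower α hα).le f :=
  ⟨hα, fun _ _ => by simp [lower]⟩

theorem map_comp_θ_eq_id_of_le_id {f : ChainHom P P}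
    (h : f.le (ChainHom.id P)) (i : Fin (P.n + 1)) :
    P.X.map (homOfLE (h.1 i)) ≫ f.θ i = 𝟙 _ :=
  (f.natural (h.1 i)).trans (h.2 (f.α i) (h.1 (f.α i))).symm

end ChainHom

namespace NegHom

variable {P Q : NegObj R}

theorem le_refl (f : P ⟶ Q) : NegHom.le f f := ChainHom.le_refl f.1

theorem le_antisymm {f g : P ⟶ Q} (h : NegHom.le f g) (h' : NegHom.le g f) : f = g :=
  Subtype.ext (ChainHom.eq_of_le h h'.1)

end NegHom

namespace NegObj

variable {P : NegObj R}

theorem eq_id_of_id_le (hP : P.IdRefl) {g : P ⟶ P} (h : NegHom.le (𝟙 P) g) : g = 𝟙 P := by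
  refine (Subtype.ext (ChainHom.eq_of_le h fun i => ?_)).symm
  have hθ : g.1.θ i = P.X.map (homOfLE (h.1 i)) := (h.2 i (h.1 i)).trans (Category.id_comp _)
  exact (hP (h.1 i) (R.isIdMor_of_neg_of_pos (P.negMap (h.1 i)) (hθ ▸ g.2 i))).ge

theorem eq_id_of_le_id (hP : P.IdRefl) {g : P ⟶ P} (h : NegHom.le g (𝟙 P)) : g = 𝟙 P := by
  refine Subtype.ext (ChainHom.eq_of_le h fun i => ?_)
  have hθ := ChainHom.map_comp_θ_eq_id_of_le_id h i
  have hid := R.isIdMor_of_neg_of_pos_comp (P.negMap (h.1 i)) (g.2 i) (hθ ▸ R.pos_id _)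
  exact (hP (h.1 i) hid).ge

theorem eq_id_of_equiv_id (hP : P.IdRefl) {g : P ⟶ P} (h : NegHom.equiv (𝟙 P) g) :
    g = 𝟙 P := by
  have hequiv : Equivalence fun f f' : P ⟶ P => (f = 𝟙 P ↔ f' = 𝟙 P) :=
    ⟨fun _ => Iff.rfl, Iff.symm, Iff.trans⟩
  refine (hequiv.eqvGen_iff.mp (Relation.EqvGen.mono (fun f f' hle => ?_) _ _ h)).mp rfl
  exact ⟨fun hf => eq_id_of_id_le hP (hf ▸ hle), fun hf' => eq_id_of_le_id hP (hf' ▸ hle)⟩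

theorem idRefl_of_forall_covBy
    (hP : ∀ {i k : Fin (P.n + 1)} (h : i ⋖ k), ¬ IsIdMor (P.X.map (homOfLE h.le))) :
    P.IdRefl := by
  intro i j hij hid
  by_contra hne
  obtain ⟨k, hik, hkj⟩ := exists_covBy_le_of_lt (lt_of_le_of_ne hij hne)
  obtain ⟨e, he⟩ := hid
  refine hP hik (R.isIdMor_of_neg_of_comp_eq_id (P.negMap hik.le)
    (R.neg_comp _ _ (P.negMap hkj) (R.neg_of_isIdMor ⟨e.symm, rfl⟩)) ?_)
  rw [← Category.assoc, ← P.X.map_comp, homOfLE_comp, he, eqToHom_trans, eqToHom_refl]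

theorem exists_id_le_ne_id {i k : Fin (P.n + 1)} (hik : i ⋖ k)
    (hid : IsIdMor (P.X.map (homOfLE hik.le))) :
    ∃ g : P ⟶ P, NegHom.le (𝟙 P) g ∧ g ≠ 𝟙 P := by
  let α : Fin (P.n + 1) →o Fin (P.n + 1) :=
    ⟨Function.update id i k, CovBy.monotone_update_id_left hik⟩
  have hcases : ∀ a, a = α a ∨ (a = i ∧ α a = k) := fun a =>
    (update_id_apply_eq_or i k a).imp Eq.symm id
  have hα : ∀ a, a ≤ α a := fun a =>
    (hcases a).elim le_of_eq fun h => by rw [h.2, h.1]; exact hik.le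
  refine ⟨⟨(ChainHom.id P.chain).raise α hα, fun a => R.pos_comp _ _ (R.pos_id _)
    (R.pos_of_isIdMor (isIdMor_map_homOfLE_of_eq_or P.X hik.le hid (hα a) (hcases a)))⟩,
    ChainHom.le_raise _ _ hα, fun hg => hik.ne' ?_⟩
  have hαi : Function.update id i k i = i := congrArg (fun g : P ⟶ P => g.1.α i) hg
  rwa [Function.update_self] at hαi

theorem exists_le_id_ne_id {i k : Fin (P.n + 1)} (hik : i ⋖ k)
    (hid : IsIdMor (P.X.map (homOfLE hik.le))) :
    ∃ g : P ⟶ P, NegHom.le g (𝟙 P) ∧ g ≠ 𝟙 P := by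
  let α : Fin (P.n + 1) →o Fin (P.n + 1) :=
    ⟨Function.update id k i, CovBy.monotone_update_id_right hik⟩
  have hcases : ∀ a, α a = a ∨ (α a = i ∧ a = k) := fun a =>
    (update_id_apply_eq_or k i a).imp id And.symm
  have hα : ∀ a, α a ≤ a := fun a =>
    (hcases a).elim le_of_eq fun h => by rw [h.1, h.2]; exact hik.le
  have hid' : ∀ a, IsIdMor (P.X.map (homOfLE (hα a))) := fun a =>
    isIdMor_map_homOfLE_of_eq_or P.X hik.le hid (hα a) (hcases a)
  have hiso := fun a => (hid' a).isIso
  refine ⟨⟨(ChainHom.id P.chain).lower α hα (hiso := hiso), fun a => ?_⟩,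
    ChainHom.lower_le _ _ hα (hiso := hiso), fun hg => hik.ne ?_⟩
  · have := hiso a
    exact R.pos_comp _ _ (R.pos_id _) (R.pos_of_isIdMor (hid' a).inv)
  have hαk : Function.update id k i k = k := congrArg (fun g : P ⟶ P => g.1.α k) hg
  rwa [Function.update_self] at hαk

end NegObj

section Statements

variable (R : ReedyStruct C)

theorem statement12 (P : NegObj R) :
    List.TFAE [
      P.IdRefl,
      ∀ g : P ⟶ P, NegHom.le (𝟙 P) g → g = 𝟙 P,
      ∀ g : P ⟶ P, NegHom.le g (𝟙 P) → g = 𝟙 P,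
      ∀ g : P ⟶ P, NegHom.equiv (𝟙 P) g → NegHom.le g (𝟙 P),
      ∀ g : P ⟶ P, NegHom.equiv (𝟙 P) g → g = 𝟙 P] := by
  tfae_have 1 → 2 := fun hP _ => NegObj.eq_id_of_id_le hP
  tfae_have 1 → 3 := fun hP _ => NegObj.eq_id_of_le_id hP
  tfae_have 2 → 1 := fun h2 => NegObj.idRefl_of_forall_covBy fun hik hid =>
    let ⟨g, hle, hne⟩ := NegObj.exists_id_le_ne_id hik hid
    hne (h2 g hle)
  tfae_have 3 → 1 := fun h3 => NegObj.idRefl_of_forall_covBy fun hik hid =>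
    let ⟨g, hle, hne⟩ := NegObj.exists_le_id_ne_id hik hid
    hne (h3 g hle)
  tfae_have 1 → 5 := fun hP _ => NegObj.eq_id_of_equiv_id hP
  tfae_have 5 → 4 := fun h5 g hg => h5 g hg ▸ NegHom.le_refl g
  tfae_have 4 → 2 := fun h4 g hle =>
    (NegHom.le_antisymm hle (h4 g (Relation.EqvGen.rel _ _ hle))).symm
  tfae_finish

end Statements

end ReedyPaper
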